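/- arXiv:1707.00633 — 10 statements merged into one kernel-verified Lean document; each statement's English description precedes it below -/
import Mathlib

section
/- In any rack, the square map Sq : X → X, Sq(x) = x ◃ x, is a bijection. -/
/-- In any rack, the square map `Sq x = x ◃ x` is a bijection. -/
theorem rack_sq_bijective {X : Type*} (op : X → X → X)
    (hsd : ∀ x y z, op (op x y) z = op (op x z) (op y z))
    (hbij : ∀ y, Function.Bijective (fun x => op x y)) :
    Function.Bijective (fun x => op x x) := by
  let e : X → X ≃ X := fun y => Equiv.ofBijective _ (hbij y)
  letI : Rack X :=
    { act := fun x y => op y x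
      self_distrib := fun {x y z} => hsd z y x
      invAct := fun x y => (e x).symm y
      left_inv := fun x y => (e x).symm_apply_apply y
      right_inv := fun x y => (e x).apply_symm_apply y }
  exact (Rack.selfApplyEquiv X).bijective
end

section
/- Let (X,r) be a finite non-degenerate solution to the Yang–Baxter equation. Define x ◃ y = τ_y(σ_{τ_x^{-1}(y)}(x)). Then (X, ◃) is a rack: the operation is right self-distributive and all right translations are bijective. -/
/-- `r × id` acting on triples. -/
def ybeR1 {X : Type*} (r : X × X → X × X) : X × X × X → X × X × X :=
  fun p => ((r (p.1, p.2.1)).1, (r (p.1, p.2.1)).2, p.2.2)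

/-- `id × r` acting on triples. -/
def ybeR2 {X : Type*} (r : X × X → X × X) : X × X × X → X × X × X :=
  fun p => (p.1, r p.2)

/-- The structure rack of a finite non-degenerate YBE solution:
`x ◃ y = τ_y (σ_{τ_x⁻¹ y} x)` is right self-distributive with bijective right
translations. Here `τinv x` denotes the inverse of `τ x`. -/
theorem structure_rack_is_rack {X : Type*} [Fintype X]
    (r : X × X → X × X) (σ τ τinv : X → X → X)
    (hr : ∀ x y, r (x, y) = (σ x y, τ y x))
    (hrbij : Function.Bijective r)
    (hσ : ∀ x, Function.Bijective (σ x))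
    (hτ : ∀ y, Function.Bijective (τ y))
    (hτinv : ∀ x, Function.LeftInverse (τinv x) (τ x) ∧
      Function.RightInverse (τinv x) (τ x))
    (hbraid : ybeR1 r ∘ ybeR2 r ∘ ybeR1 r = ybeR2 r ∘ ybeR1 r ∘ ybeR2 r) :
    (∀ x y z, τ z (σ (τinv (τ y (σ (τinv x y) x)) z) (τ y (σ (τinv x y) x))) =
        τ (τ z (σ (τinv y z) y)) (σ (τinv (τ z (σ (τinv x z) x)) (τ z (σ (τinv y z) y)))
          (τ z (σ (τinv x z) x))) ∧
      Function.Bijective (fun x => τ y (σ (τinv x y) x))) := by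
  have braid : ∀ u v w : X,
      σ (σ u v) (σ (τ v u) w) = σ u (σ v w) ∧
      τ (σ (τ v u) w) (σ u v) = σ (τ (σ v w) u) (τ w v) ∧
      τ w (τ v u) = τ (τ w v) (τ (σ v w) u) := by
    intro u v w
    have h := congrFun hbraid (u, v, w)
    simp only [Function.comp, ybeR1, ybeR2, hr, Prod.mk.injEq] at h
    exact ⟨h.1, h.2.1, h.2.2⟩
  intro x y z
  constructor
  · -- self-distributivity
    set a := τinv x y with ha
    set c := τinv x z with hc
    set b := τinv y z with hb
    have hya : τ x a = y := (hτinv x).2 y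
    have hzc : τ x c = z := (hτinv x).2 z
    have hzb : τ y b = z := (hτinv y).2 z
    set p := σ a x with hp
    set q := σ c x with hq
    set m := σ b y with hm
    set u := τinv a c with hu
    have hcu : τ a u = c := (hτinv a).2 c
    set g := σ u a with hg
    -- B1 at (u, a, x)
    obtain ⟨B11, B12, B13⟩ := braid u a x
    rw [hcu] at B11 B12 B13
    rw [hya] at B12 B13
    rw [hzc] at B13
    -- B11 : σ g q = σ u p ; B12 : τ q g = σ (τ p u) y ; B13 : z = τ y (τ p u)
    have hbu : τ p u = b := by
      apply (hτ y).injective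
      rw [← B13, hzb]
    rw [hbu] at B12
    -- B12 : τ q g = m
    -- B2 at (u, p, y)
    obtain ⟨B21, B22, B23⟩ := braid u p y
    rw [hbu] at B22 B23
    rw [hzb] at B23
    -- B22 : τ m (σ u p) = σ (τ (σ p y) u) (τ y p) ; B23 : z = τ (τ y p) (τ (σ p y) u)
    set e := τ (σ p y) u with he
    have hee : τinv (τ y p) z = e := by
      rw [B23]; exact (hτinv (τ y p)).1 e
    -- B3 at (g, q, z)
    obtain ⟨B31, B32, B33⟩ := braid g q z
    rw [B12] at B32 B33
    set f := τ (σ q z) g with hf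
    -- B32 : τ (σ m z) (σ g q) = σ f (τ z q) ; B33 : τ z m = τ (τ z q) f
    have hff : τinv (τ z q) (τ z m) = f := by
      rw [B33]; exact (hτinv (τ z q)).1 f
    -- B4 at (σ g q, m, z)
    obtain ⟨_, _, B43⟩ := braid (σ g q) m z
    -- B43 : τ z (τ m (σ g q)) = τ (τ z m) (τ (σ m z) (σ g q))
    calc τ z (σ (τinv (τ y p) z) (τ y p))
        = τ z (σ e (τ y p)) := by rw [hee]
      _ = τ z (τ m (σ u p)) := by rw [B22]
      _ = τ z (τ m (σ g q)) := by rw [B11]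
      _ = τ (τ z m) (τ (σ m z) (σ g q)) := B43
      _ = τ (τ z m) (σ f (τ z q)) := by rw [B32]
      _ = τ (τ z m) (σ (τinv (τ z q) (τ z m)) (τ z q)) := by rw [hff]
  · -- bijectivity of right translation
    have hinj : Function.Injective (fun x => τ y (σ (τinv x y) x)) := by
      intro x1 x2 h
      simp only at h
      have hs : σ (τinv x1 y) x1 = σ (τinv x2 y) x2 := (hτ y).injective h
      have h1 : r (τinv x1 y, x1) = r (τinv x2 y, x2) := by
        rw [hr, hr, hs, (hτinv x1).2 y, (hτinv x2).2 y]
      have h2 := hrbij.injective h1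
      exact congrArg Prod.snd h2
    exact Finite.injective_iff_bijective.mp hinj
end

section
/- Let (X,r) be a finite non-degenerate solution to the Yang–Baxter equation, and let ◃ be its structure rack operation x ◃ y = τ_y(σ_{τ_x^{-1}(y)}(x)). Then for every z ∈ X, the map τ_z is a rack automorphism of (X, ◃), i.e., τ_z(x ◃ y) = τ_z(x) ◃ τ_z(y) for all x, y. -/
/-- For a finite non-degenerate YBE solution with structure rack operation
`x ◃ y = τ_y (σ_{τ_x⁻¹ y} x)`, every `τ_z` is a rack automorphism:
`τ_z (x ◃ y) = τ_z x ◃ τ_z y`. -/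
theorem tau_rack_automorphism {X : Type*} [Fintype X]
    (r : X × X → X × X) (σ τ τinv : X → X → X)
    (hr : ∀ x y, r (x, y) = (σ x y, τ y x))
    (hrbij : Function.Bijective r)
    (hσ : ∀ x, Function.Bijective (σ x))
    (hτ : ∀ y, Function.Bijective (τ y))
    (hτinv : ∀ x, Function.LeftInverse (τinv x) (τ x) ∧
      Function.RightInverse (τinv x) (τ x))
    (hbraid : ybeR1 r ∘ ybeR2 r ∘ ybeR1 r = ybeR2 r ∘ ybeR1 r ∘ ybeR2 r)
    (op : X → X → X) (hop : ∀ x y, op x y = τ y (σ (τinv x y) x)) :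
    ∀ z x y, τ z (op x y) = op (τ z x) (τ z y) := by
  have key : ∀ x y z : X, ybeR1 r (ybeR2 r (ybeR1 r (x,y,z))) = ybeR2 r (ybeR1 r (ybeR2 r (x,y,z))) := by
    intro x y z
    exact congrFun hbraid (x,y,z)
  have e2 : ∀ x y z, τ (σ (τ y x) z) (σ x y) = σ (τ (σ y z) x) (τ z y) := by
    intro x y z
    have h := key x y z
    simp only [ybeR1, ybeR2, hr] at h
    exact congrArg (fun p => p.2.1) h
  have e3 : ∀ x y z, τ z (τ y x) = τ (τ z y) (τ (σ y z) x) := by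
    intro x y z
    have h := key x y z
    simp only [ybeR1, ybeR2, hr] at h
    exact congrArg (fun p => p.2.2) h
  intro z x y
  have hya : τ x (τinv x y) = y := (hτinv x).2 y
  rw [hop, hop]
  have step1 : τ z (τ y (σ (τinv x y) x))
      = τ (τ z y) (τ (σ y z) (σ (τinv x y) x)) := e3 (σ (τinv x y) x) y z
  have step2 : τ (σ y z) (σ (τinv x y) x)
      = σ (τ (σ x z) (τinv x y)) (τ z x) := by
    have h := e2 (τinv x y) x z
    rw [hya] at h
    exact h
  have hb : τ (τ z x) (τ (σ x z) (τinv x y)) = τ z y := by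
    have h := e3 (τinv x y) x z
    rw [hya] at h
    exact h.symm
  have hc : τ (σ x z) (τinv x y) = τinv (τ z x) (τ z y) := by
    have h := (hτinv (τ z x)).1 (τ (σ x z) (τinv x y))
    rw [hb] at h
    exact h.symm
  rw [step1, step2, hc]
end

section
/- Let (X,r) be a finite non-degenerate solution to the Yang–Baxter equation. The maps T : X → X, y ↦ τ_y^{-1}(y), and U : X → X, x ↦ σ_x^{-1}(x ▹ x), where x ▹ x = σ_x(τ_{σ_x^{-1}(x)}(x)) is the left structure rack square, are mutually inverse bijections. -/
/-- For a finite non-degenerate YBE solution, the maps `T : y ↦ τ_y⁻¹ y` and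
`U : x ↦ σ_x⁻¹ (x ▹ x)`, where `x ▹ x = σ_x (τ_{σ_x⁻¹ x} x)` is the left
structure rack square, are mutually inverse bijections. -/
theorem T_U_mutually_inverse {X : Type*} [Fintype X]
    (r : X × X → X × X) (σ τ σinv τinv : X → X → X)
    (hr : ∀ x y, r (x, y) = (σ x y, τ y x))
    (hrbij : Function.Bijective r)
    (hσ : ∀ x, Function.Bijective (σ x))
    (hτ : ∀ y, Function.Bijective (τ y))
    (hσinv : ∀ x, Function.LeftInverse (σinv x) (σ x) ∧
      Function.RightInverse (σinv x) (σ x))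
    (hτinv : ∀ x, Function.LeftInverse (τinv x) (τ x) ∧
      Function.RightInverse (τinv x) (τ x))
    (hbraid : ybeR1 r ∘ ybeR2 r ∘ ybeR1 r = ybeR2 r ∘ ybeR1 r ∘ ybeR2 r) :
    Function.LeftInverse (fun x => σinv x (σ x (τ (σinv x x) x))) (fun y => τinv y y) ∧
      Function.RightInverse (fun x => σinv x (σ x (τ (σinv x x) x))) (fun y => τinv y y) := by
  -- Third-component consequence of the braid relation:
  -- τ_c (τ_b a) = τ_{τ_c b} (τ_{σ_b c} a)
  have h3 : ∀ a b c, τ c (τ b a) = τ (τ c b) (τ (σ b c) a) := by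
    intro a b c
    have h := congrFun hbraid (a, b, c)
    simp only [Function.comp_apply, ybeR1, ybeR2, hr] at h
    exact congrArg (fun p => p.2.2) h
  -- Key fact: with w = σ_x⁻¹ x and z = τ_w x, we have τ_z x = z.
  have key : ∀ x, τ (τ (σinv x x) x) x = τ (σinv x x) x := by
    intro x
    have hw : σ x (σinv x x) = x := (hσinv x).2 x
    have hT : ∀ a, τ (τ (σinv x x) x) (τ x a) = τ (σinv x x) (τ x a) := by
      intro a
      have h := h3 a x (σinv x x)
      rw [hw] at h
      exact h.symm
    have h := hT (τinv x x)
    rwa [(hτinv x).2 x] at h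
  -- Simplify U x
  have hU : ∀ x, σinv x (σ x (τ (σinv x x) x)) = τ (σinv x x) x :=
    fun x => (hσinv x).1 _
  -- T (U x) = x
  have hTU : ∀ x, τinv (σinv x (σ x (τ (σinv x x) x)))
      (σinv x (σ x (τ (σinv x x) x))) = x := by
    intro x
    rw [hU x]
    have h := (hτinv (τ (σinv x x) x)).1 x
    rw [key x] at h
    exact h
  constructor
  · -- LeftInverse U T : U (T y) = y, via injectivity of U and finiteness
    intro y
    have hinj : Function.Injective
        (fun x => σinv x (σ x (τ (σinv x x) x))) := by
      intro a b hab
      have ha := hTU a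
      simp only at hab
      rw [hab, hTU b] at ha
      exact ha.symm
    obtain ⟨x, hx⟩ := Finite.surjective_of_injective hinj y
    simp only at hx ⊢
    have : τinv y y = x := by rw [← hx]; exact hTU x
    rw [this, hx]
  · exact hTU
end

section
/- Let (X,r) be a finite non-degenerate solution to the Yang–Baxter equation, with right structure rack operation x ◃ y = τ_y(σ_{τ_x^{-1}(y)}(x)) and left structure rack operation y ▹ x = σ_y(τ__{σ_x^{-1}(y)}(x)). Then x ◃ x = x ▹ x for every x ∈ X. -/
/-- For a finite non-degenerate YBE solution, the squares of the right and left
structure rack operations coincide: `x ◃ x = x ▹ x`, where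
`x ◃ y = τ_y (σ_{τ_x⁻¹ y} x)` and `y ▹ x = σ_y (τ_{σ_x⁻¹ y} x)`. -/
theorem right_sq_eq_left_sq {X : Type*} [Fintype X]
    (r : X × X → X × X) (σ τ σinv τinv : X → X → X)
    (hr : ∀ x y, r (x, y) = (σ x y, τ y x))
    (hrbij : Function.Bijective r)
    (hσ : ∀ x, Function.Bijective (σ x))
    (hτ : ∀ y, Function.Bijective (τ y))
    (hσinv : ∀ x, Function.LeftInverse (σinv x) (σ x) ∧
      Function.RightInverse (σinv x) (σ x))
    (hτinv : ∀ x, Function.LeftInverse (τinv x) (τ x) ∧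
      Function.RightInverse (τinv x) (τ x))
    (hbraid : ybeR1 r ∘ ybeR2 r ∘ ybeR1 r = ybeR2 r ∘ ybeR1 r ∘ ybeR2 r) :
    ∀ x : X, τ x (σ (τinv x x) x) = σ x (τ (σinv x x) x) := by
  intro x
  set a := τinv x x with ha'
  set b := σinv x x with hb'
  have ha : τ x a = x := (hτinv x).2 x
  have hb : σ x b = x := (hσinv x).2 x
  have h := congrFun hbraid (a, x, b)
  simp only [ybeR1, ybeR2, Function.comp_apply, hr] at h
  simp only [ha, hb] at h
  exact congrArg (fun p => p.2.1) h
end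

section
/- The right and left structure racks of a finite non-degenerate solution (X,r) are isomorphic: concretely, the bijection T : X → X, T(y) = τ_y^{-1}(y), satisfies T(y ▹ x) = T(x) ◃ T(y) for all x, y ∈ X. -/
private lemma core_calc {X : Type*} (σ τ : X → X → X)
    (B1 : ∀ a b c, σ (σ a b) (σ (τ b a) c) = σ a (σ b c))
    (B2 : ∀ a b c, τ (σ (τ b a) c) (σ a b) = σ (τ (σ b c) a) (τ c b))
    (B3 : ∀ a b c, τ c (τ b a) = τ (τ c b) (τ (σ b c) a))
    (hτinj : ∀ z, Function.Injective (τ z))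
    (x y p q u c w s : X)
    (hp : τ x p = x) (hq : τ y q = y)
    (hσxc : σ x c = y) (hτcx : τ c x = u)
    (hσsp : σ s p = w) (hτps : τ p s = q) :
    τ (σ y u) (τ q w) = σ y u := by
  have hqs : τ (σ p x) s = q := by
    have h := B3 s p x
    rw [hτps, hp] at h
    exact (hτinj x h).symm
  have hi : τ (σ q x) w = σ q x := by
    have h := B2 s p x
    rw [hτps, hσsp, hp, hqs] at h
    exact h
  have hii : τ (σ (τ x q) c) (σ q x) = σ y u := by
    have h := B2 q x c
    rw [hσxc, hq, hτcx] at h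
    exact h
  have hii1 : σ (σ q x) (σ (τ x q) c) = σ q y := by
    have h := B1 q x c
    rw [hσxc] at h
    exact h
  have hiii : ∀ t, τ (σ q y) t = τ q t := by
    intro t
    have h := B3 t q y
    rw [hq] at h
    exact (hτinj y h).symm
  have h := B3 w (σ q x) (σ (τ x q) c)
  rw [hi, hii, hii1, hiii] at h
  exact h.symm

/-- The right and left structure racks of a finite non-degenerate YBE solution
are isomorphic: the bijection `T : y ↦ τ_y⁻¹ y` satisfies
`T (y ▹ x) = T x ◃ T y`, where `x ◃ y = τ_y (τ̂_y⁻¹ x)`, `y ▹ x = σ_y (σ̂_y⁻¹ x)`,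
and `σ̂, τ̂` are the components of `r⁻¹`. -/
theorem left_right_structure_racks_iso {X : Type*} [Fintype X]
    (r rinv : X × X → X × X) (σ τ σh τh τinv σhinv τhinv : X → X → X)
    (hr : ∀ x y, r (x, y) = (σ x y, τ y x))
    (hrinv : ∀ x y, rinv (x, y) = (σh x y, τh y x))
    (hinv₁ : Function.LeftInverse rinv r) (hinv₂ : Function.RightInverse rinv r)
    (hσ : ∀ x, Function.Bijective (σ x))
    (hτ : ∀ y, Function.Bijective (τ y))
    (hτinv : ∀ y, Function.LeftInverse (τinv y) (τ y) ∧
      Function.RightInverse (τinv y) (τ y))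
    (hσhinv : ∀ y, Function.LeftInverse (σhinv y) (σh y) ∧
      Function.RightInverse (σhinv y) (σh y))
    (hτhinv : ∀ y, Function.LeftInverse (τhinv y) (τh y) ∧
      Function.RightInverse (τhinv y) (τh y))
    (hbraid : ybeR1 r ∘ ybeR2 r ∘ ybeR1 r = ybeR2 r ∘ ybeR1 r ∘ ybeR2 r)
    (op lop : X → X → X) (T : X → X)
    (hop : ∀ x y, op x y = τ y (τhinv y x))
    (hlop : ∀ y x, lop y x = σ y (σhinv y x))
    (hT : ∀ y, T y = τinv y y) :
    Function.Bijective T ∧ ∀ x y, T (lop y x) = op (T x) (T y) := by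
  have hτinj : ∀ z, Function.Injective (τ z) := fun z => (hτ z).1
  -- componentwise braid relations
  have hB : ∀ a b c : X,
      σ (σ a b) (σ (τ b a) c) = σ a (σ b c) ∧
      τ (σ (τ b a) c) (σ a b) = σ (τ (σ b c) a) (τ c b) ∧
      τ c (τ b a) = τ (τ c b) (τ (σ b c) a) := by
    intro a b c
    have h := congrFun hbraid (a, b, c)
    simp only [Function.comp_apply, ybeR1, ybeR2, hr, Prod.mk.injEq] at h
    exact h
  have B1 : ∀ a b c, σ (σ a b) (σ (τ b a) c) = σ a (σ b c) := fun a b c => (hB a b c).1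
  have B2 : ∀ a b c, τ (σ (τ b a) c) (σ a b) = σ (τ (σ b c) a) (τ c b) :=
    fun a b c => (hB a b c).2.1
  have B3 : ∀ a b c, τ c (τ b a) = τ (τ c b) (τ (σ b c) a) := fun a b c => (hB a b c).2.2
  have hconv : ∀ a b : X, r (σh a b, τh b a) = (a, b) := by
    intro a b
    have h := hinv₂ (a, b)
    rwa [hrinv] at h
  constructor
  · -- bijectivity, via surjectivity
    rw [← Finite.surjective_iff_bijective]
    intro q
    obtain ⟨d, hd⟩ := (hσ q).2 q
    refine ⟨τ d q, ?_⟩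
    have h3 := B3 (τinv q q) q d
    rw [hd, (hτinv q).2 q] at h3
    -- h3 : τ d q = τ (τ d q) q
    have h4 := (hτinv (τ d q)).1 q
    rw [← h3] at h4
    rw [hT]
    exact h4
  · intro x y
    have hp : τ x (T x) = x := by rw [hT x]; exact (hτinv x).2 x
    have hq : τ y (T y) = y := by rw [hT y]; exact (hτinv y).2 y
    have h1 : σ x (τh (σhinv y x) y) = y ∧ τ (τh (σhinv y x) y) x = σhinv y x := by
      have h := hconv y (σhinv y x)
      rw [(hσhinv y).2 x, hr] at h
      simpa only [Prod.mk.injEq] using h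
    have h2 : σ (σh (τhinv (T y) (T x)) (T y)) (T x) = τhinv (T y) (T x) ∧
        τ (T x) (σh (τhinv (T y) (T x)) (T y)) = T y := by
      have h := hconv (τhinv (T y) (T x)) (T y)
      rw [(hτhinv (T y)).2 (T x), hr] at h
      simpa only [Prod.mk.injEq] using h
    have key := core_calc σ τ B1 B2 B3 hτinj x y (T x) (T y) (σhinv y x)
      (τh (σhinv y x) y) (τhinv (T y) (T x)) (σh (τhinv (T y) (T x)) (T y))
      hp hq h1.1 h1.2 h2.1 h2.2
    rw [hlop, hop, hT (σ y (σhinv y x))]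
    have h := (hτinv (σ y (σhinv y x))).1 (τ (T y) (τhinv (T y) (T x)))
    rw [key] at h
    exact h
end

section
/- Let G be a finitely generated virtually abelian group. Then G is bi-orderable if and only if G is free abelian. -/
/-!
A bi-ordering makes `x ↦ x ^ n` strictly monotone, so a bi-orderable group is torsion-free
and has unique roots. If `x` commutes with `y ^ n`, then `x y x⁻¹` and `y` have the same
`n`-th power, hence are equal. Every element has a power in the finite-index abelian subgroup,
so any two elements have commuting powers, and removing the powers one at a time shows that the
group is abelian. A finitely generated torsion-free abelian group is free abelian of finite rank.
Conversely, `ℤⁿ` is bi-ordered lexicographically.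
-/

def IsBiOrderable (G : Type*) [Group G] : Prop :=
  ∃ _ : LinearOrder G, MulLeftMono G ∧ MulRightMono G

theorem isBiOrderable_iff {G : Type*} [Group G] : IsBiOrderable G ↔
    ∃ _ : LinearOrder G,
      (∀ a b c : G, a ≤ b → c * a ≤ c * b) ∧ (∀ a b c : G, a ≤ b → a * c ≤ b * c) := by
  refine exists_congr fun _ => and_congr ?_ ?_ <;>
    exact ⟨fun h a b c => h.elim c, fun h => ⟨fun c _ _ => h _ _ c⟩⟩

theorem IsBiOrderable.isMulTorsionFree {G : Type*} [Group G] (h : IsBiOrderable G) :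
    IsMulTorsionFree G := by
  obtain ⟨_, _, _⟩ := h
  infer_instance

theorem IsBiOrderable.of_injective {G M : Type*} [Group G] [Group M] (hM : IsBiOrderable M)
    (f : G →* M) (hf : Function.Injective f) : IsBiOrderable G := by
  obtain ⟨_, hl, hr⟩ := hM
  let _ : LinearOrder G := LinearOrder.lift' f hf
  refine ⟨‹_›, ⟨fun c a b h => ?_⟩, ⟨fun c a b h => ?_⟩⟩
  · show f (c * a) ≤ f (c * b)
    simpa only [map_mul] using hl.elim (f c) h
  · show f (a * c) ≤ f (b * c)
    simpa only [map_mul] using hr.elim (f c) h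

theorem isBiOrderable_multiplicative_fin_int (n : ℕ) :
    IsBiOrderable (Multiplicative (Fin n → ℤ)) :=
  IsBiOrderable.of_injective (M := Multiplicative (Lex (Fin n → ℤ)))
    ⟨inferInstance, inferInstance, inferInstance⟩
    (toLexAddEquiv (Fin n → ℤ)).toMultiplicative.toMonoidHom
    (toLexAddEquiv (Fin n → ℤ)).toMultiplicative.injective

theorem Commute.of_pow_right {G : Type*} [Group G] [IsMulTorsionFree G] {a b : G} {n : ℕ}
    (hn : n ≠ 0) (h : Commute a (b ^ n)) : Commute a b := by
  have : (a * b * a⁻¹) ^ n = b ^ n := by rw [conj_pow, h.eq, mul_inv_cancel_right]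
  rw [Commute, SemiconjBy, ← mul_inv_eq_iff_eq_mul, pow_left_injective hn this]

theorem Commute.of_pow_left {G : Type*} [Group G] [IsMulTorsionFree G] {a b : G} {n : ℕ}
    (hn : n ≠ 0) (h : Commute (a ^ n) b) : Commute a b :=
  (h.symm.of_pow_right hn).symm

theorem Subgroup.commute_of_isMulTorsionFree_of_finiteIndex {G : Type*} [Group G]
    [IsMulTorsionFree G] (H : Subgroup G) [H.FiniteIndex] (hH : ∀ a b : H, a * b = b * a)
    (a b : G) : Commute a b := by
  obtain ⟨m, hm, -, ham⟩ := H.exists_pow_mem_of_index_ne_zero H.index_ne_zero_of_finite a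
  obtain ⟨n, hn, -, hbn⟩ := H.exists_pow_mem_of_index_ne_zero H.index_ne_zero_of_finite b
  have : Commute (a ^ m) (b ^ n) := congrArg Subtype.val (hH ⟨_, ham⟩ ⟨_, hbn⟩)
  exact (this.of_pow_left hm.ne').of_pow_right hn.ne'

theorem CommGroup.exists_mulEquiv_multiplicative_fin_int {G : Type*} [CommGroup G]
    [IsMulTorsionFree G] (hfg : Group.FG G) :
    ∃ n : ℕ, Nonempty (G ≃* Multiplicative (Fin n → ℤ)) := by
  have : Module.Finite ℤ (Additive G) :=
    Module.Finite.iff_addGroup_fg.mpr (GroupFG.iff_add_fg.mp hfg)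
  exact ⟨_, ⟨(Module.finBasis ℤ (Additive G)).equivFun.toAddEquiv.toMultiplicativeRight⟩⟩

/-- A finitely generated virtually abelian group is bi-orderable if and only if
it is free abelian. -/
theorem fg_virtually_abelian_biorderable_iff_free_abelian
    {G : Type*} [Group G] (hfg : Group.FG G)
    (H : Subgroup G) (hH : H.FiniteIndex) (hcomm : ∀ a b : H, a * b = b * a) :
    (∃ _ : LinearOrder G,
        (∀ a b c : G, a ≤ b → c * a ≤ c * b) ∧ (∀ a b c : G, a ≤ b → a * c ≤ b * c)) ↔
      ∃ n : ℕ, Nonempty (G ≃* Multiplicative (Fin n → ℤ)) := by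
  rw [← isBiOrderable_iff]
  constructor
  · intro hG
    have := hG.isMulTorsionFree
    let _ : CommGroup G := { mul_comm := H.commute_of_isMulTorsionFree_of_finiteIndex hcomm }
    exact CommGroup.exists_mulEquiv_multiplicative_fin_int hfg
  · rintro ⟨n, ⟨e⟩⟩
    exact (isBiOrderable_multiplicative_fin_int n).of_injective e.toMonoidHom e.injective
end

section
/- Let (X, ◃) be a finite rack with orbits O_1, …, O_k, orbit representatives x_1, …, x_k, and for each i let D_i be the minimal integer D ≥ 2 with ρ_{x_i}^D = id. Then the subgroup Z of the structure group G generated by x_1^{D_1}, …, x_k^{D_k} is central and free abelian of rank k, and the quotient G/Z is a finite group. -/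
/-!
The right translations give a homomorphism `π` from `G` to the finite group `(Sym X)ᵐᵒᵖ`
with `g⁻¹ x g = π(g)(x)`, so `ker π` is central of finite index. Since `ρ_{xᵢ}^{Dᵢ} = id`,
every `xᵢ^{Dᵢ}` lies in `ker π`, hence `Z` is central. The degree map `θ : G → ℤ^(orbits)`,
`x ↦ e_[x]`, sends `xᵢ^{Dᵢ}` to `Dᵢ eᵢ`, so `Z` is free abelian on these generators; and
`ker θ = [G, G]` because `e_O ↦ [x]` for any `x ∈ O` splits `θ` over the abelianization.
As the centre has finite index, `[G, G]` is finite by Schur's theorem. Finally, the elements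
whose degree is divisible by `Dᵢ` in every coordinate `i` form a subgroup of finite index
contained in `[G, G] · Z`, so `Z` has finite index.
-/

/-- The defining relations of the structure group of a rack:
`x y = y (x ◃ y)` for all `x, y`. -/
def rackRels {X : Type*} (op : X → X → X) : Set (FreeGroup X) :=
  {w | ∃ x y, w = FreeGroup.of x * FreeGroup.of y *
    (FreeGroup.of y * FreeGroup.of (op x y))⁻¹}

/-- The structure group of a rack `(X, ◃)`. -/
abbrev RackGroup {X : Type*} (op : X → X → X) : Type _ :=
  PresentedGroup (rackRels op)

/-- The orbit equivalence of a rack: generated by `x ∼ x ◃ y`. -/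
def rackOrbitSetoid {X : Type*} (op : X → X → X) : Setoid X :=
  Relation.EqvGen.setoid (fun a b => ∃ y, b = op a y)

open Subgroup
open scoped commutatorElement

section Group

variable {G : Type*} [Group G]

theorem commutatorElement_mul_of_mem_center (a b : G) {z w : G} (hz : z ∈ center G)
    (hw : w ∈ center G) : ⁅a * z, b * w⁆ = ⁅a, b⁆ := by
  rw [mem_center_iff] at hz hw
  simp only [commutatorElement_def, mul_inv_rev]
  calc a * z * (b * w) * (z⁻¹ * a⁻¹) * (w⁻¹ * b⁻¹)
      = a * (z * (b * w)) * z⁻¹ * a⁻¹ * (w⁻¹ * b⁻¹) := by group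
    _ = a * b * (w * a⁻¹) * w⁻¹ * b⁻¹ := by rw [← hz (b * w)]; group
    _ = a * b * a⁻¹ * b⁻¹ := by rw [← hw a⁻¹]; group

theorem finite_commutatorSet_of_finiteIndex_center [(center G).FiniteIndex] :
    Finite (commutatorSet G) := by
  refine Set.Finite.subset (Set.finite_range fun p : (G ⧸ center G) × (G ⧸ center G) =>
    ⁅p.1.out, p.2.out⁆) ?_
  rintro _ ⟨a, b, rfl⟩
  obtain ⟨z, hz⟩ := QuotientGroup.mk_out_eq_mul (center G) a
  obtain ⟨w, hw⟩ := QuotientGroup.mk_out_eq_mul (center G) b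
  exact ⟨(a, b), by simp only [hz, hw, commutatorElement_mul_of_mem_center a b z.2 w.2]⟩

theorem Subgroup.normal_of_le_center {H : Subgroup G} (h : H ≤ center G) : H.Normal :=
  ⟨fun n hn g => by rwa [mem_center_iff.mp (h hn) g, mul_inv_cancel_right]⟩

theorem Subgroup.finiteIndex_of_le_sup_of_finite {Z C K : Subgroup G} [Z.Normal] [Finite C]
    [K.FiniteIndex] (h : K ≤ C ⊔ Z) : Z.FiniteIndex := by
  have := finiteIndex_of_le h
  rw [finiteIndex_iff, ← relIndex_mul_index le_sup_right, relIndex_sup_right]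
  exact mul_ne_zero (Z.subgroupOf C).index_ne_zero_of_finite (C ⊔ Z).index_ne_zero_of_finite

theorem PresentedGroup.mem_center_iff {α : Type*} {rels : Set (FreeGroup α)}
    {g : PresentedGroup rels} :
    g ∈ center (PresentedGroup rels) ↔ ∀ x, .of x * g = g * .of x := by
  rw [← centralizer_univ, ← coe_top, ← closure_range_of, centralizer_closure,
    mem_centralizer_iff, Set.forall_mem_range]

end Group

section FreeAbelian

variable {ι : Type*}

noncomputable def Finsupp.liftZPow {H : Type*} [CommGroup H] (a : ι → H) :
    Multiplicative (ι →₀ ℤ) →* H :=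
  AddMonoidHom.toMultiplicativeLeft <|
    Finsupp.liftAddHom fun i => zmultiplesHom _ (Additive.ofMul (a i))

@[simp] theorem Finsupp.liftZPow_single {H : Type*} [CommGroup H] (a : ι → H) (i : ι)
    (n : ℤ) : liftZPow a (.ofAdd (single i n)) = a i ^ n := by
  simp [liftZPow]

noncomputable def Finsupp.reduceMod (D : ι → ℕ) :
    Multiplicative (ι →₀ ℤ) →* Multiplicative (∀ i, ZMod (D i)) :=
  AddMonoidHom.toMultiplicative <|
    AddMonoidHom.pi fun i => (Int.castAddHom (ZMod (D i))).comp (Finsupp.applyAddHom i)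

theorem Finsupp.reduceMod_eq_one_iff {D : ι → ℕ} {f : Multiplicative (ι →₀ ℤ)} :
    reduceMod D f = 1 ↔ ∀ i, (D i : ℤ) ∣ f.toAdd i := by
  simp [reduceMod, ← ZMod.intCast_zmod_eq_zero_iff_dvd, funext_iff, AddMonoidHom.pi_apply]

variable {G : Type*} [Group G]

open scoped IsMulCommutative in
noncomputable def Subgroup.centerLift (c : ι → center G) :
    Multiplicative (ι →₀ ℤ) →* G :=
  (center G).subtype.comp (Finsupp.liftZPow c)

@[simp] theorem Subgroup.centerLift_single (c : ι → center G) (i : ι) (n : ℤ) :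
    centerLift c (.ofAdd (Finsupp.single i n)) = (c i : G) ^ n := by
  simp [centerLift]

theorem Subgroup.range_centerLift_le_center (c : ι → center G) :
    (centerLift c).range ≤ center G := by
  rintro _ ⟨f, rfl⟩
  exact SetLike.coe_mem _

theorem Subgroup.range_centerLift (c : ι → center G) :
    (centerLift c).range = closure (Set.range fun i => (c i : G)) := by
  refine le_antisymm ?_ ((closure_le _).mpr ?_)
  · suffices ∀ f : ι →₀ ℤ,
        centerLift c (.ofAdd f) ∈ closure (Set.range fun i => (c i : G)) from
      fun _ ⟨f, hf⟩ => hf ▸ this f.toAdd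
    intro f
    induction f using Finsupp.induction_linear with
    | zero => simp
    | add f g hf hg => simpa only [ofAdd_add, map_mul] using mul_mem hf hg
    | single i n =>
      rw [centerLift_single]
      exact zpow_mem (subset_closure (Set.mem_range_self i)) n
  · rintro _ ⟨i, rfl⟩
    exact ⟨.ofAdd (Finsupp.single i 1), by simp⟩

variable {c : ι → center G} {θ : G →* Multiplicative (ι →₀ ℤ)} {D : ι → ℕ}

theorem toAdd_map_centerLift_apply
    (hθ : ∀ i, θ (c i) = .ofAdd (Finsupp.single i (D i : ℤ))) (f : ι →₀ ℤ) (i : ι) :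
    (θ (centerLift c (.ofAdd f))).toAdd i = f i * D i := by
  classical
  induction f using Finsupp.induction_linear with
  | zero => simp
  | add f g hf hg => simp [ofAdd_add, hf, hg, add_mul]
  | single j n =>
    rw [centerLift_single, map_zpow, hθ, ← ofAdd_zsmul, toAdd_ofAdd, Finsupp.smul_single,
      smul_eq_mul, Finsupp.single_apply, Finsupp.single_apply]
    split_ifs <;> simp_all [mul_comm]

theorem centerLift_injective (hθ : ∀ i, θ (c i) = .ofAdd (Finsupp.single i (D i : ℤ)))
    (hD : ∀ i, D i ≠ 0) : Function.Injective (centerLift c) := by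
  intro f g hfg
  ext i
  apply mul_right_cancel₀ (Int.natCast_ne_zero.mpr (hD i))
  rw [← toAdd_map_centerLift_apply hθ, ← toAdd_map_centerLift_apply hθ]
  exact congrArg (fun g => (θ g).toAdd i) hfg

theorem ker_reduceMod_comp_le_sup [Finite ι]
    (hθ : ∀ i, θ (c i) = .ofAdd (Finsupp.single i (D i : ℤ))) :
    ((Finsupp.reduceMod D).comp θ).ker ≤ θ.ker ⊔ (centerLift c).range := by
  intro n hn
  rw [MonoidHom.mem_ker, MonoidHom.comp_apply, Finsupp.reduceMod_eq_one_iff] at hn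
  set z := centerLift c (.ofAdd (Finsupp.equivFunOnFinite.symm fun i => (θ n).toAdd i / D i))
  have hz : θ z = θ n := by
    ext i
    rw [toAdd_map_centerLift_apply hθ, Finsupp.coe_equivFunOnFinite_symm,
      Int.ediv_mul_cancel (hn i)]
  have hnz : n * z⁻¹ ∈ θ.ker := by simp [hz]
  have hz_mem : z ∈ θ.ker ⊔ (centerLift c).range := mem_sup_right ⟨_, rfl⟩
  simpa using mul_mem (mem_sup_left hnz) hz_mem

end FreeAbelian

abbrev RackOrbit {X : Type*} (op : X → X → X) : Type _ := Quotient (rackOrbitSetoid op)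

theorem RackOrbit.mk_op {X : Type*} (op : X → X → X) (x y : X) :
    (⟦op x y⟧ : RackOrbit op) = ⟦x⟧ :=
  (Quotient.sound (Relation.EqvGen.rel _ _ ⟨y, rfl⟩)).symm

namespace RackGroup

variable {X : Type*} (op : X → X → X)

abbrev of (x : X) : RackGroup op := PresentedGroup.of x

theorem of_mul_of (x y : X) : of op x * of op y = of op y * of op (op x y) :=
  eq_of_mul_inv_eq_one (PresentedGroup.one_of_mem ⟨x, y, rfl⟩)

section Permutation

variable {op} (hsd : ∀ x y z, op (op x y) z = op (op x z) (op y z))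
  (hbij : ∀ y, Function.Bijective (fun x => op x y))

noncomputable def toPerm : RackGroup op →* (Equiv.Perm X)ᵐᵒᵖ :=
  PresentedGroup.toGroup (f := fun y => .op (Equiv.ofBijective _ (hbij y))) <| by
    rintro _ ⟨x, y, rfl⟩
    simp only [map_mul, map_inv, FreeGroup.lift_apply_of, mul_inv_eq_one, ← MulOpposite.op_mul]
    congr 1
    ext t
    exact hsd t x y

theorem toPerm_of (y : X) :
    (toPerm hsd hbij (of op y)).unop = Equiv.ofBijective _ (hbij y) :=
  congrArg MulOpposite.unop (PresentedGroup.toGroup.of _)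

theorem inv_mul_of_mul (g : RackGroup op) (t : X) :
    g⁻¹ * of op t * g = of op ((toPerm hsd hbij g).unop t) := by
  have hg : g ∈ closure (Set.range (of op)) := by
    rw [PresentedGroup.closure_range_of]; trivial
  induction hg using closure_induction generalizing t with
  | mem _ h =>
    obtain ⟨y, rfl⟩ := h
    rw [toPerm_of, Equiv.ofBijective_apply, mul_assoc, of_mul_of, inv_mul_cancel_left]
  | one => simp
  | mul a b _ _ iha ihb =>
    rw [mul_inv_rev, map_mul, MulOpposite.unop_mul, Equiv.Perm.mul_apply, ← ihb, ← iha]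
    group
  | inv a _ iha =>
    have := iha ((toPerm hsd hbij a⁻¹).unop t)
    rw [← Equiv.Perm.mul_apply, ← MulOpposite.unop_mul, ← map_mul, inv_mul_cancel, map_one,
      MulOpposite.unop_one, Equiv.Perm.one_apply] at this
    rw [← this]
    group

theorem ker_toPerm_le_center : (toPerm hsd hbij).ker ≤ center (RackGroup op) := by
  intro g hg
  refine PresentedGroup.mem_center_iff.mpr fun t => ?_
  have h := inv_mul_of_mul hsd hbij g t
  rw [MonoidHom.mem_ker.mp hg, MulOpposite.unop_one, Equiv.Perm.one_apply] at h
  calc of op t * g = g * (g⁻¹ * of op t * g) := by group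
    _ = g * of op t := by rw [h]

include hsd hbij in
theorem finiteIndex_center_of_finite [Finite X] : (center (RackGroup op)).FiniteIndex :=
  have : Finite (Equiv.Perm X)ᵐᵒᵖ := .of_equiv _ MulOpposite.opEquiv
  finiteIndex_of_le (ker_toPerm_le_center hsd hbij)

theorem of_pow_mem_ker_toPerm {y : X} {n : ℕ} (h : (fun x => op x y)^[n] = id) :
    of op y ^ n ∈ (toPerm hsd hbij).ker := by
  rw [MonoidHom.mem_ker, map_pow, ← MulOpposite.unop_inj, MulOpposite.unop_pow, toPerm_of,
    MulOpposite.unop_one, Equiv.ext_iff]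
  simp [Equiv.Perm.coe_pow, h]

end Permutation

section Degree

noncomputable def degree : RackGroup op →* Multiplicative (RackOrbit op →₀ ℤ) :=
  PresentedGroup.toGroup (f := fun x => .ofAdd (Finsupp.single ⟦x⟧ 1)) <| by
    rintro _ ⟨x, y, rfl⟩
    simp only [map_mul, map_inv, FreeGroup.lift_apply_of, RackOrbit.mk_op, mul_inv_eq_one,
      mul_comm]

theorem degree_of (x : X) : degree op (of op x) = .ofAdd (Finsupp.single ⟦x⟧ 1) :=
  PresentedGroup.toGroup.of _

theorem degree_of_pow {xs : RackOrbit op → X} (hxs : ∀ o, ⟦xs o⟧ = o)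
    (D : RackOrbit op → ℕ) (o : RackOrbit op) :
    degree op (of op (xs o) ^ D o) = .ofAdd (Finsupp.single o (D o : ℤ)) := by
  rw [map_pow, degree_of, hxs, ← ofAdd_nsmul, Finsupp.smul_single, nsmul_one]

theorem abelianization_of_eq_of_mk_eq {x z : X} (h : (⟦x⟧ : RackOrbit op) = ⟦z⟧) :
    Abelianization.of (of op x) = Abelianization.of (of op z) := by
  refine Setoid.eqvGen_le (s := Setoid.ker fun x => Abelianization.of (of op x)) ?_
    (Quotient.exact h)
  rintro x _ ⟨y, rfl⟩
  have := congrArg Abelianization.of (of_mul_of op x y)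
  rw [map_mul, map_mul, mul_comm] at this
  exact mul_left_cancel this

noncomputable def orbitAbelianization : RackOrbit op → Abelianization (RackGroup op) :=
  Quotient.lift (fun x => Abelianization.of (of op x)) fun _ _ h =>
    abelianization_of_eq_of_mk_eq op (Quotient.sound h)

theorem liftZPow_comp_degree :
    (Finsupp.liftZPow (orbitAbelianization op)).comp (degree op) = Abelianization.of :=
  PresentedGroup.ext fun x => by simp [degree_of, orbitAbelianization]

theorem ker_degree_le_commutator : (degree op).ker ≤ commutator (RackGroup op) := by
  intro g hg
  rw [← Abelianization.ker_of, MonoidHom.mem_ker, ← liftZPow_comp_degree, MonoidHom.comp_apply,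
    MonoidHom.mem_ker.mp hg, map_one]

end Degree

end RackGroup

open RackGroup in
/-- For a finite rack with orbit representatives `xs o` and `D o` the minimal
`D ≥ 2` with `ρ_{xs o}^D = id`, the subgroup `Z` of the structure group
generated by the `(xs o)^(D o)` is central and free abelian of rank the number
of orbits, and the quotient `G ⧸ Z` is finite. -/
theorem rack_group_finite_quotient {X : Type*} [Fintype X] (op : X → X → X)
    (hsd : ∀ x y z, op (op x y) z = op (op x z) (op y z))
    (hbij : ∀ y, Function.Bijective (fun x => op x y))
    (xs : Quotient (rackOrbitSetoid op) → X)
    (hxs : ∀ o, Quotient.mk (rackOrbitSetoid op) (xs o) = o)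
    (D : Quotient (rackOrbitSetoid op) → ℕ)
    (hD : ∀ o, 2 ≤ D o ∧ (fun t => op t (xs o))^[D o] = id ∧
      ∀ d, 2 ≤ d → (fun t => op t (xs o))^[d] = id → D o ≤ d)
    (Z : Subgroup (RackGroup op))
    (hZ : Z = Subgroup.closure
      {g | ∃ o, g = (PresentedGroup.of (xs o) : RackGroup op) ^ (D o)}) :
    Z ≤ Subgroup.center (RackGroup op) ∧
      Nonempty (Z ≃* Multiplicative (Quotient (rackOrbitSetoid op) →₀ ℤ)) ∧
      Finite (RackGroup op ⧸ Z) := by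
  have hD0 (o) : D o ≠ 0 := by have := (hD o).1; omega
  let c (o : RackOrbit op) : center (RackGroup op) :=
    ⟨of op (xs o) ^ D o,
      ker_toPerm_le_center hsd hbij (of_pow_mem_ker_toPerm hsd hbij (hD o).2.1)⟩
  have hdeg (o) : degree op (c o) = .ofAdd (Finsupp.single o (D o : ℤ)) :=
    degree_of_pow op hxs D o
  have hZc : Z = (centerLift c).range := by
    rw [hZ, range_centerLift]
    congr 1
    ext
    simp [c, eq_comm]
  have hZcenter : Z ≤ center (RackGroup op) := hZc ▸ range_centerLift_le_center c
  refine ⟨hZcenter, ⟨(MulEquiv.subgroupCongr hZc).trans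
    (MonoidHom.ofInjective (centerLift_injective hdeg hD0)).symm⟩, ?_⟩
  have := finiteIndex_center_of_finite hsd hbij
  have := finite_commutatorSet_of_finiteIndex_center (G := RackGroup op)
  have := normal_of_le_center hZcenter
  have (o : RackOrbit op) : NeZero (D o) := ⟨hD0 o⟩
  have hker : ((Finsupp.reduceMod D).comp (degree op)).ker ≤ commutator (RackGroup op) ⊔ Z :=
    hZc ▸ (ker_reduceMod_comp_le_sup hdeg).trans
      (sup_le_sup_right (ker_degree_le_commutator op) _)
  exact finiteIndex_iff_finite_quotient.mp (finiteIndex_of_le_sup_of_finite hker)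
end

section
/- Let φ : G → H be a bijective group 1-cocycle, where the group G acts on the group H on the right by automorphisms (so φ(g₁g₂) = φ(g₁)^{g₂} φ(g₂)). Suppose relations {gᵢ = gᵢ′ : i ∈ I} in G satisfy: (1) h^{gᵢ} = h^{gᵢ′} for all h ∈ H and i ∈ I, and (2) for each g ∈ G, the set of pairs {(φ(gᵢ)^g, φ(gᵢ′)^g) : i ∈ I} equals {(φ(gᵢ), φ(gᵢ′)) : i ∈ I}. Then the G-action descends to an action of G/⟨⟨gᵢ(gᵢ′)^{-1}⟩⟩ on H/⟨⟨φ(gᵢ)φ(gᵢ′)^{-1}⟩⟩, and φ induces a bijective group 1-cocycle between these quotients. -/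
set_option linter.unusedSectionVars false

section CocycleQuotientAux

variable {G H : Type*} [Group G] [Group H]

/-- The action of any element of `M = ncl {φ(g i) φ(g' i)⁻¹}` stays in `M`. -/
theorem cq_actM
    (act : H → G → H)
    (hmul : ∀ (a : G) (h₁ h₂ : H), act (h₁ * h₂) a = act h₁ a * act h₂ a)
    (φ : G → H)
    {I : Type*} (g g' : I → G)
    (h2 : ∀ a : G,
      {p : H × H | ∃ i, p = (act (φ (g i)) a, act (φ (g' i)) a)} =
        {p : H × H | ∃ i, p = (φ (g i), φ (g' i))}) :
    ∀ m ∈ Subgroup.normalClosure {x : H | ∃ i, x = φ (g i) * (φ (g' i))⁻¹}, ∀ a : G,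
      act m a ∈ Subgroup.normalClosure {x : H | ∃ i, x = φ (g i) * (φ (g' i))⁻¹} := by
  have act_one : ∀ a : G, act 1 a = 1 := by
    intro a
    have h := hmul a 1 1
    rw [one_mul] at h
    exact left_eq_mul.mp h
  have act_inv : ∀ (h : H) (a : G), act h⁻¹ a = (act h a)⁻¹ := by
    intro h a
    have e := hmul a h h⁻¹
    rw [mul_inv_cancel, act_one] at e
    exact (inv_eq_of_mul_eq_one_right e.symm).symm
  intro m hm a
  have hm' : m ∈ Subgroup.closure (Group.conjugatesOfSet
      {x : H | ∃ i, x = φ (g i) * (φ (g' i))⁻¹}) := hm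
  refine Subgroup.closure_induction
    (p := fun x _ =>
      act x a ∈ Subgroup.normalClosure {x : H | ∃ i, x = φ (g i) * (φ (g' i))⁻¹})
    ?_ ?_ ?_ ?_ hm'
  · intro x hx
    show act x a ∈ Subgroup.normalClosure {x : H | ∃ i, x = φ (g i) * (φ (g' i))⁻¹}
    obtain ⟨y, hy, hconj⟩ := Group.mem_conjugatesOfSet_iff.mp hx
    obtain ⟨i, rfl⟩ := hy
    obtain ⟨c, hc⟩ := isConj_iff.mp hconj
    rw [← hc]
    have e : act (c * (φ (g i) * (φ (g' i))⁻¹) * c⁻¹) a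
        = act c a * (act (φ (g i)) a * (act (φ (g' i)) a)⁻¹) * (act c a)⁻¹ := by
      rw [hmul, hmul, hmul, act_inv, act_inv]
    rw [e]
    have hp := (Set.ext_iff.mp (h2 a) ((act (φ (g i)) a, act (φ (g' i)) a))).mp
      ⟨i, rfl⟩
    obtain ⟨j, hj⟩ := hp
    have hj1 : act (φ (g i)) a = φ (g j) := congrArg Prod.fst hj
    have hj2 : act (φ (g' i)) a = φ (g' j) := congrArg Prod.snd hj
    rw [hj1, hj2]
    exact Subgroup.normalClosure_normal.conj_mem _
      (Subgroup.subset_normalClosure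
        (show φ (g j) * (φ (g' j))⁻¹ ∈ {x : H | ∃ i, x = φ (g i) * (φ (g' i))⁻¹}
          from ⟨j, rfl⟩)) _
  · show act (1 : H) a ∈ Subgroup.normalClosure {x : H | ∃ i, x = φ (g i) * (φ (g' i))⁻¹}
    rw [act_one]; exact Subgroup.one_mem _
  · intro x y _ _ ihx ihy
    show act (x * y) a ∈ Subgroup.normalClosure {x : H | ∃ i, x = φ (g i) * (φ (g' i))⁻¹}
    rw [hmul]; exact Subgroup.mul_mem _ ihx ihy
  · intro x _ ihx
    show act x⁻¹ a ∈ Subgroup.normalClosure {x : H | ∃ i, x = φ (g i) * (φ (g' i))⁻¹}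
    rw [act_inv]; exact Subgroup.inv_mem _ ihx

/-- Every element of `N = ncl {g i * (g' i)⁻¹}` acts trivially on `H`, and its `φ`-image
lies in `M`. -/
theorem cq_N
    (act : H → G → H)
    (hmul : ∀ (a : G) (h₁ h₂ : H), act (h₁ * h₂) a = act h₁ a * act h₂ a)
    (hcomp : ∀ (h : H) (a b : G), act h (a * b) = act (act h a) b)
    (hone : ∀ h : H, act h 1 = h)
    (φ : G → H)
    (hcoc : ∀ a b : G, φ (a * b) = act (φ a) b * φ b)
    {I : Type*} (g g' : I → G)
    (h1 : ∀ (h : H) (i : I), act h (g i) = act h (g' i))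
    (h2 : ∀ a : G,
      {p : H × H | ∃ i, p = (act (φ (g i)) a, act (φ (g' i)) a)} =
        {p : H × H | ∃ i, p = (φ (g i), φ (g' i))}) :
    ∀ n ∈ Subgroup.normalClosure {x : G | ∃ i, x = g i * (g' i)⁻¹},
      (∀ h : H, act h n = h) ∧
        φ n ∈ Subgroup.normalClosure {x : H | ∃ i, x = φ (g i) * (φ (g' i))⁻¹} := by
  have act_one : ∀ a : G, act 1 a = 1 := by
    intro a
    have h := hmul a 1 1
    rw [one_mul] at h
    exact left_eq_mul.mp h
  have act_inv : ∀ (h : H) (a : G), act h⁻¹ a = (act h a)⁻¹ := by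
    intro h a
    have e := hmul a h h⁻¹
    rw [mul_inv_cancel, act_one] at e
    exact (inv_eq_of_mul_eq_one_right e.symm).symm
  have phi_one : φ 1 = 1 := by
    have h := hcoc 1 1
    rw [mul_one, hone] at h
    exact (left_eq_mul.mp h)
  have phi_mulK : ∀ a k : G, (∀ h : H, act h k = h) → φ (a * k) = φ a * φ k := by
    intro a k hk
    rw [hcoc a k, hk]
  have kinv : ∀ n : G, (∀ h : H, act h n = h) → ∀ h : H, act h n⁻¹ = h := by
    intro n hn h
    have e : act (act h n⁻¹) n = act h (n⁻¹ * n) := (hcomp h n⁻¹ n).symm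
    rw [hn] at e
    rw [inv_mul_cancel, hone] at e
    exact e
  have key1 : ∀ (c n : G), (∀ h : H, act h n = h) →
      φ (c⁻¹ * n * c) = (φ c)⁻¹ * (act (φ n) c * φ c) := by
    intro c n hn
    have hK : ∀ h : H, act h (c⁻¹ * n * c) = h := by
      intro h
      rw [mul_assoc, hcomp, hcomp, hn, ← hcomp, inv_mul_cancel, hone]
    have e1 : φ (n * c) = act (φ n) c * φ c := hcoc n c
    have e2 : φ (n * c) = φ c * φ (c⁻¹ * n * c) := by
      have e3 : c * (c⁻¹ * n * c) = n * c := by group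
      rw [← e3, phi_mulK c _ hK]
    rw [e2] at e1
    exact eq_inv_mul_iff_mul_eq.mpr e1
  have hKsig : ∀ i : I, ∀ h : H, act h ((g' i)⁻¹ * g i) = h := by
    intro i h
    rw [hcomp, h1, ← hcomp, inv_mul_cancel, hone]
  have hphisig : ∀ i : I, φ ((g' i)⁻¹ * g i) = (φ (g' i))⁻¹ * φ (g i) := by
    intro i
    have e : φ (g' i * ((g' i)⁻¹ * g i)) = φ (g' i) * φ ((g' i)⁻¹ * g i) :=
      phi_mulK _ _ (hKsig i)
    rw [show g' i * ((g' i)⁻¹ * g i) = g i by group] at e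
    exact eq_inv_mul_iff_mul_eq.mpr e.symm
  have hzM : ∀ i : I, (φ (g' i))⁻¹ * φ (g i) ∈
      Subgroup.normalClosure {x : H | ∃ i, x = φ (g i) * (φ (g' i))⁻¹} := by
    intro i
    have h := Subgroup.normalClosure_normal.conj_mem _
      (Subgroup.subset_normalClosure
        (show φ (g i) * (φ (g' i))⁻¹ ∈ {x : H | ∃ i, x = φ (g i) * (φ (g' i))⁻¹}
          from ⟨i, rfl⟩)) (φ (g' i))⁻¹
    have e : (φ (g' i))⁻¹ * (φ (g i) * (φ (g' i))⁻¹) * ((φ (g' i))⁻¹)⁻¹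
        = (φ (g' i))⁻¹ * φ (g i) := by group
    rwa [e] at h
  intro n hn
  have hn' : n ∈ Subgroup.closure (Group.conjugatesOfSet
      {x : G | ∃ i, x = g i * (g' i)⁻¹}) := hn
  refine Subgroup.closure_induction
    (p := fun x _ => (∀ h : H, act h x = h) ∧
      φ x ∈ Subgroup.normalClosure {x : H | ∃ i, x = φ (g i) * (φ (g' i))⁻¹})
    ?_ ?_ ?_ ?_ hn'
  · intro x hx
    show (∀ h : H, act h x = h) ∧
      φ x ∈ Subgroup.normalClosure {x : H | ∃ i, x = φ (g i) * (φ (g' i))⁻¹}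
    obtain ⟨y, hy, hconj⟩ := Group.mem_conjugatesOfSet_iff.mp hx
    obtain ⟨i, rfl⟩ := hy
    obtain ⟨c, hc⟩ := isConj_iff.mp hconj
    rw [← hc]
    constructor
    · intro h
      have hσ : ∀ hh : H, act hh (g i * (g' i)⁻¹) = hh := by
        intro hh
        rw [hcomp, h1, ← hcomp, mul_inv_cancel, hone]
      rw [mul_assoc, hcomp, hcomp, hσ, ← hcomp, mul_inv_cancel, hone]
    · have e : c * (g i * (g' i)⁻¹) * c⁻¹
          = ((c * g' i)⁻¹)⁻¹ * ((g' i)⁻¹ * g i) * (c * g' i)⁻¹ := by group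
      rw [e, key1 _ _ (hKsig i), hphisig i]
      have hact : act ((φ (g' i))⁻¹ * φ (g i)) ((c * g' i)⁻¹) ∈
          Subgroup.normalClosure {x : H | ∃ i, x = φ (g i) * (φ (g' i))⁻¹} :=
        cq_actM act hmul φ g g' h2 _ (hzM i) _
      have h := Subgroup.normalClosure_normal.conj_mem _ hact (φ ((c * g' i)⁻¹))⁻¹
      have e2 : (φ ((c * g' i)⁻¹))⁻¹ * act ((φ (g' i))⁻¹ * φ (g i)) ((c * g' i)⁻¹) *
          ((φ ((c * g' i)⁻¹))⁻¹)⁻¹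
          = (φ ((c * g' i)⁻¹))⁻¹ *
            (act ((φ (g' i))⁻¹ * φ (g i)) ((c * g' i)⁻¹) * φ ((c * g' i)⁻¹)) := by group
      rwa [e2] at h
  · show (∀ h : H, act h (1 : G) = h) ∧
      φ (1 : G) ∈ Subgroup.normalClosure {x : H | ∃ i, x = φ (g i) * (φ (g' i))⁻¹}
    exact ⟨hone, by rw [phi_one]; exact Subgroup.one_mem _⟩
  · intro x y _ _ ihx ihy
    show (∀ h : H, act h (x * y) = h) ∧
      φ (x * y) ∈ Subgroup.normalClosure {x : H | ∃ i, x = φ (g i) * (φ (g' i))⁻¹}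
    refine ⟨fun h => by rw [hcomp, ihx.1, ihy.1], ?_⟩
    rw [phi_mulK x y ihy.1]
    exact Subgroup.mul_mem _ ihx.2 ihy.2
  · intro x _ ihx
    show (∀ h : H, act h x⁻¹ = h) ∧
      φ x⁻¹ ∈ Subgroup.normalClosure {x : H | ∃ i, x = φ (g i) * (φ (g' i))⁻¹}
    refine ⟨kinv x ihx.1, ?_⟩
    have e : φ (x * x⁻¹) = φ x * φ x⁻¹ := phi_mulK _ _ (kinv x ihx.1)
    rw [mul_inv_cancel, phi_one] at e
    have e2 : φ x⁻¹ = (φ x)⁻¹ := (inv_eq_of_mul_eq_one_right e.symm).symm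
    rw [e2]
    exact Subgroup.inv_mem _ ihx.2

/-- Every element of `M` is the `φ`-image of an element of `N`. -/
theorem cq_MphiN
    (act : H → G → H)
    (hmul : ∀ (a : G) (h₁ h₂ : H), act (h₁ * h₂) a = act h₁ a * act h₂ a)
    (hcomp : ∀ (h : H) (a b : G), act h (a * b) = act (act h a) b)
    (hone : ∀ h : H, act h 1 = h)
    (φ : G → H) (hφ : Function.Bijective φ)
    (hcoc : ∀ a b : G, φ (a * b) = act (φ a) b * φ b)
    {I : Type*} (g g' : I → G)
    (h1 : ∀ (h : H) (i : I), act h (g i) = act h (g' i))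
    (h2 : ∀ a : G,
      {p : H × H | ∃ i, p = (act (φ (g i)) a, act (φ (g' i)) a)} =
        {p : H × H | ∃ i, p = (φ (g i), φ (g' i))}) :
    ∀ m ∈ Subgroup.normalClosure {x : H | ∃ i, x = φ (g i) * (φ (g' i))⁻¹},
      ∃ n ∈ Subgroup.normalClosure {x : G | ∃ i, x = g i * (g' i)⁻¹}, φ n = m := by
  have act_one : ∀ a : G, act 1 a = 1 := by
    intro a
    have h := hmul a 1 1
    rw [one_mul] at h
    exact left_eq_mul.mp h
  have act_inv : ∀ (h : H) (a : G), act h⁻¹ a = (act h a)⁻¹ := by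
    intro h a
    have e := hmul a h h⁻¹
    rw [mul_inv_cancel, act_one] at e
    exact (inv_eq_of_mul_eq_one_right e.symm).symm
  have phi_one : φ 1 = 1 := by
    have h := hcoc 1 1
    rw [mul_one, hone] at h
    exact (left_eq_mul.mp h)
  have phi_mulK : ∀ a k : G, (∀ h : H, act h k = h) → φ (a * k) = φ a * φ k := by
    intro a k hk
    rw [hcoc a k, hk]
  have kinv : ∀ n : G, (∀ h : H, act h n = h) → ∀ h : H, act h n⁻¹ = h := by
    intro n hn h
    have e : act (act h n⁻¹) n = act h (n⁻¹ * n) := (hcomp h n⁻¹ n).symm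
    rw [hn] at e
    rw [inv_mul_cancel, hone] at e
    exact e
  have key1 : ∀ (c n : G), (∀ h : H, act h n = h) →
      φ (c⁻¹ * n * c) = (φ c)⁻¹ * (act (φ n) c * φ c) := by
    intro c n hn
    have hK : ∀ h : H, act h (c⁻¹ * n * c) = h := by
      intro h
      rw [mul_assoc, hcomp, hcomp, hn, ← hcomp, inv_mul_cancel, hone]
    have e1 : φ (n * c) = act (φ n) c * φ c := hcoc n c
    have e2 : φ (n * c) = φ c * φ (c⁻¹ * n * c) := by
      have e3 : c * (c⁻¹ * n * c) = n * c := by group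
      rw [← e3, phi_mulK c _ hK]
    rw [e2] at e1
    exact eq_inv_mul_iff_mul_eq.mpr e1
  have hKsig : ∀ i : I, ∀ h : H, act h ((g' i)⁻¹ * g i) = h := by
    intro i h
    rw [hcomp, h1, ← hcomp, inv_mul_cancel, hone]
  have hphisig : ∀ i : I, φ ((g' i)⁻¹ * g i) = (φ (g' i))⁻¹ * φ (g i) := by
    intro i
    have e : φ (g' i * ((g' i)⁻¹ * g i)) = φ (g' i) * φ ((g' i)⁻¹ * g i) :=
      phi_mulK _ _ (hKsig i)
    rw [show g' i * ((g' i)⁻¹ * g i) = g i by group] at e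
    exact eq_inv_mul_iff_mul_eq.mpr e.symm
  -- the crucial fact: every conjugate of `φ(g' i)⁻¹ φ(g i)` is the `φ`-image of an
  -- element of `N`.
  have key2 : ∀ (c : G) (i : I),
      ∃ n ∈ Subgroup.normalClosure {x : G | ∃ i, x = g i * (g' i)⁻¹},
        φ n = (φ c)⁻¹ * (((φ (g' i))⁻¹ * φ (g i)) * φ c) := by
    intro c i
    have hp := (Set.ext_iff.mp (h2 c⁻¹) ((act (φ (g i)) c⁻¹, act (φ (g' i)) c⁻¹))).mp
      ⟨i, rfl⟩
    obtain ⟨j, hj⟩ := hp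
    have hj1 : act (φ (g i)) c⁻¹ = φ (g j) := congrArg Prod.fst hj
    have hj2 : act (φ (g' i)) c⁻¹ = φ (g' j) := congrArg Prod.snd hj
    refine ⟨c⁻¹ * ((g' j)⁻¹ * g j) * c, ?_, ?_⟩
    · have hmem : (g' j)⁻¹ * (g j * (g' j)⁻¹) * ((g' j)⁻¹)⁻¹ ∈
          Subgroup.normalClosure {x : G | ∃ i, x = g i * (g' i)⁻¹} :=
        Subgroup.normalClosure_normal.conj_mem _
          (Subgroup.subset_normalClosure
            (show g j * (g' j)⁻¹ ∈ {x : G | ∃ i, x = g i * (g' i)⁻¹}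
              from ⟨j, rfl⟩)) _
      have e : (g' j)⁻¹ * (g j * (g' j)⁻¹) * ((g' j)⁻¹)⁻¹ = (g' j)⁻¹ * g j := by group
      rw [e] at hmem
      have hmem2 := Subgroup.normalClosure_normal.conj_mem _ hmem c⁻¹
      have e2 : c⁻¹ * ((g' j)⁻¹ * g j) * (c⁻¹)⁻¹ = c⁻¹ * ((g' j)⁻¹ * g j) * c := by
        rw [inv_inv]
      rwa [e2] at hmem2
    · rw [key1 c _ (hKsig j), hphisig j, ← hj1, ← hj2, ← act_inv, ← hmul, ← hcomp,
        inv_mul_cancel, hone]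
  intro m hm
  have hm' : m ∈ Subgroup.closure (Group.conjugatesOfSet
      {x : H | ∃ i, x = φ (g i) * (φ (g' i))⁻¹}) := hm
  have hNfix := cq_N act hmul hcomp hone φ hcoc g g' h1 h2
  refine Subgroup.closure_induction
    (p := fun x _ =>
      ∃ n ∈ Subgroup.normalClosure {x : G | ∃ i, x = g i * (g' i)⁻¹}, φ n = x)
    ?_ ?_ ?_ ?_ hm'
  · intro x hx
    show ∃ n ∈ Subgroup.normalClosure {x : G | ∃ i, x = g i * (g' i)⁻¹}, φ n = x
    obtain ⟨y, hy, hconj⟩ := Group.mem_conjugatesOfSet_iff.mp hx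
    obtain ⟨i, rfl⟩ := hy
    obtain ⟨c, hc⟩ := isConj_iff.mp hconj
    obtain ⟨d, hd⟩ := hφ.2 ((c * φ (g' i))⁻¹)
    obtain ⟨n, hn, hφn⟩ := key2 d i
    refine ⟨n, hn, ?_⟩
    rw [hφn, hd, ← hc]
    group
  · show ∃ n ∈ Subgroup.normalClosure {x : G | ∃ i, x = g i * (g' i)⁻¹}, φ n = (1 : H)
    exact ⟨1, Subgroup.one_mem _, phi_one⟩
  · intro x y hx' hy' ihx ihy
    show ∃ n ∈ Subgroup.normalClosure {x : G | ∃ i, x = g i * (g' i)⁻¹}, φ n = x * y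
    obtain ⟨n₁, hn₁, rfl⟩ := ihx
    obtain ⟨n₂, hn₂, rfl⟩ := ihy
    exact ⟨n₁ * n₂, Subgroup.mul_mem _ hn₁ hn₂,
      phi_mulK n₁ n₂ (hNfix n₂ hn₂).1⟩
  · intro x hx' ihx
    show ∃ n ∈ Subgroup.normalClosure {x : G | ∃ i, x = g i * (g' i)⁻¹}, φ n = x⁻¹
    obtain ⟨n, hn, rfl⟩ := ihx
    refine ⟨n⁻¹, Subgroup.inv_mem _ hn, ?_⟩
    have e : φ (n * n⁻¹) = φ n * φ n⁻¹ := phi_mulK _ _ (kinv n (hNfix n hn).1)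
    rw [mul_inv_cancel, phi_one] at e
    exact (inv_eq_of_mul_eq_one_right e.symm).symm

end CocycleQuotientAux

/-- Passing to quotients in a bijective group 1-cocycle `φ : G → H`, where `G`
acts on `H` on the right by automorphisms. Given relations `g i = g' i` in `G`
such that (1) `h^(g i) = h^(g' i)` for all `h`, and (2) for each `a ∈ G` the set
of pairs `(φ(g i)^a, φ(g' i)^a)` equals the set of pairs `(φ(g i), φ(g' i))`,
the action descends to the quotients by the corresponding normal closures and
`φ` induces a bijective 1-cocycle between them. -/
theorem cocycle_quotient {G H : Type*} [Group G] [Group H]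
    (act : H → G → H)
    (hmul : ∀ (a : G) (h₁ h₂ : H), act (h₁ * h₂) a = act h₁ a * act h₂ a)
    (hcomp : ∀ (h : H) (a b : G), act h (a * b) = act (act h a) b)
    (hone : ∀ h : H, act h 1 = h)
    (φ : G → H) (hφ : Function.Bijective φ)
    (hcoc : ∀ a b : G, φ (a * b) = act (φ a) b * φ b)
    {I : Type*} (g g' : I → G)
    (h1 : ∀ (h : H) (i : I), act h (g i) = act h (g' i))
    (h2 : ∀ a : G,
      {p : H × H | ∃ i, p = (act (φ (g i)) a, act (φ (g' i)) a)} =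
        {p : H × H | ∃ i, p = (φ (g i), φ (g' i))}) :
    ∃ (act' : H ⧸ Subgroup.normalClosure {x | ∃ i, x = φ (g i) * (φ (g' i))⁻¹} →
        G ⧸ Subgroup.normalClosure {x | ∃ i, x = g i * (g' i)⁻¹} →
        H ⧸ Subgroup.normalClosure {x | ∃ i, x = φ (g i) * (φ (g' i))⁻¹})
      (φ' : G ⧸ Subgroup.normalClosure {x | ∃ i, x = g i * (g' i)⁻¹} →
        H ⧸ Subgroup.normalClosure {x | ∃ i, x = φ (g i) * (φ (g' i))⁻¹}),
      (∀ (h : H) (a : G), act' (QuotientGroup.mk h) (QuotientGroup.mk a) =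
        QuotientGroup.mk (act h a)) ∧
      (∀ a h₁ h₂, act' (h₁ * h₂) a = act' h₁ a * act' h₂ a) ∧
      (∀ h a b, act' h (a * b) = act' (act' h a) b) ∧
      (∀ h, act' h 1 = h) ∧
      (∀ a : G, φ' (QuotientGroup.mk a) = QuotientGroup.mk (φ a)) ∧
      Function.Bijective φ' ∧
      (∀ a b, φ' (a * b) = act' (φ' a) b * φ' b) := by
  have act_one : ∀ a : G, act 1 a = 1 := by
    intro a
    have h := hmul a 1 1
    rw [one_mul] at h
    exact left_eq_mul.mp h
  have act_inv : ∀ (h : H) (a : G), act h⁻¹ a = (act h a)⁻¹ := by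
    intro h a
    have e := hmul a h h⁻¹
    rw [mul_inv_cancel, act_one] at e
    exact (inv_eq_of_mul_eq_one_right e.symm).symm
  have phi_mulK : ∀ a k : G, (∀ h : H, act h k = h) → φ (a * k) = φ a * φ k := by
    intro a k hk
    rw [hcoc a k, hk]
  have hNfix := cq_N act hmul hcomp hone φ hcoc g g' h1 h2
  have hactM := cq_actM act hmul φ g g' h2
  have hMphiN := cq_MphiN act hmul hcomp hone φ hφ hcoc g g' h1 h2
  -- well-definedness of the action on quotients
  have wd_act : ∀ (x : H) (y : G) (x' : H) (y' : G),
      @Setoid.r _ (QuotientGroup.leftRel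
        (Subgroup.normalClosure {x : H | ∃ i, x = φ (g i) * (φ (g' i))⁻¹})) x x' →
      @Setoid.r _ (QuotientGroup.leftRel
        (Subgroup.normalClosure {x : G | ∃ i, x = g i * (g' i)⁻¹})) y y' →
      (QuotientGroup.mk (act x y) :
        H ⧸ Subgroup.normalClosure {x | ∃ i, x = φ (g i) * (φ (g' i))⁻¹}) =
        QuotientGroup.mk (act x' y') := by
    intro x y x' y' hx hy
    rw [QuotientGroup.leftRel_apply] at hx hy
    have hy' : act x' y' = act x' y := by
      have e : y' = y * (y⁻¹ * y') := by group
      rw [e, hcomp, (hNfix _ hy).1]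
    rw [QuotientGroup.eq, hy']
    have e2 : (act x y)⁻¹ * act x' y = act (x⁻¹ * x') y := by
      rw [hmul, act_inv]
    rw [e2]
    exact hactM _ hx y
  have wd_phi : ∀ (a b : G),
      @Setoid.r _ (QuotientGroup.leftRel
        (Subgroup.normalClosure {x : G | ∃ i, x = g i * (g' i)⁻¹})) a b →
      (QuotientGroup.mk (φ a) :
        H ⧸ Subgroup.normalClosure {x | ∃ i, x = φ (g i) * (φ (g' i))⁻¹}) =
        QuotientGroup.mk (φ b) := by
    intro a b hab
    rw [QuotientGroup.leftRel_apply] at hab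
    rw [QuotientGroup.eq]
    have e2 : φ b = φ a * φ (a⁻¹ * b) := by
      have e3 := phi_mulK a (a⁻¹ * b) (hNfix _ hab).1
      rw [show a * (a⁻¹ * b) = b by group] at e3
      exact e3
    rw [e2, ← mul_assoc, inv_mul_cancel, one_mul]
    exact (hNfix _ hab).2
  refine ⟨fun hq aq => Quotient.liftOn₂' hq aq
      (fun x y => QuotientGroup.mk (act x y)) wd_act,
    fun q => Quotient.liftOn' q (fun a => QuotientGroup.mk (φ a)) wd_phi,
    fun h a => rfl, ?_, ?_, ?_, fun a => rfl, ⟨?_, ?_⟩, ?_⟩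
  · intro a h₁ h₂
    induction a using QuotientGroup.induction_on with | H a =>
    induction h₁ using QuotientGroup.induction_on with | H x =>
    induction h₂ using QuotientGroup.induction_on with | H y =>
    show Quotient.liftOn₂' (QuotientGroup.mk x * QuotientGroup.mk y) _ _ _ = _
    rw [← QuotientGroup.mk_mul]
    show QuotientGroup.mk (act (x * y) a) =
      QuotientGroup.mk (act x a) * QuotientGroup.mk (act y a)
    rw [← QuotientGroup.mk_mul, hmul]
  · intro h a b
    induction h using QuotientGroup.induction_on with | H x =>
    induction a using QuotientGroup.induction_on with | H y =>
    induction b using QuotientGroup.induction_on with | H z =>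
    show Quotient.liftOn₂' (QuotientGroup.mk x)
      (QuotientGroup.mk y * QuotientGroup.mk z) _ _ = _
    rw [← QuotientGroup.mk_mul]
    show QuotientGroup.mk (act x (y * z)) = QuotientGroup.mk (act (act x y) z)
    rw [hcomp]
  · intro h
    induction h using QuotientGroup.induction_on with | H x =>
    show Quotient.liftOn₂' (QuotientGroup.mk x) (1 :
      G ⧸ Subgroup.normalClosure {x | ∃ i, x = g i * (g' i)⁻¹}) _ _ = _
    rw [show (1 : G ⧸ Subgroup.normalClosure {x | ∃ i, x = g i * (g' i)⁻¹}) =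
      QuotientGroup.mk 1 from rfl]
    show QuotientGroup.mk (act x 1) = QuotientGroup.mk x
    rw [hone]
  · -- injectivity
    intro q₁ q₂ hq
    induction q₁ using QuotientGroup.induction_on with | H a =>
    induction q₂ using QuotientGroup.induction_on with | H b =>
    have hq' : (QuotientGroup.mk (φ a) :
        H ⧸ Subgroup.normalClosure {x | ∃ i, x = φ (g i) * (φ (g' i))⁻¹}) =
        QuotientGroup.mk (φ b) := hq
    rw [QuotientGroup.eq] at hq'
    obtain ⟨n, hn, hφn⟩ := hMphiN _ hq'
    have e : φ b = φ (a * n) := by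
      rw [phi_mulK a n (hNfix n hn).1, hφn]
      group
    have e2 : b = a * n := hφ.1 e
    rw [QuotientGroup.eq, e2]
    have e3 : a⁻¹ * (a * n) = n := by group
    rw [e3]
    exact hn
  · -- surjectivity
    intro q
    induction q using QuotientGroup.induction_on with | H x =>
    obtain ⟨a, rfl⟩ := hφ.2 x
    exact ⟨QuotientGroup.mk a, rfl⟩
  · -- cocycle identity
    intro a b
    induction a using QuotientGroup.induction_on with | H x =>
    induction b using QuotientGroup.induction_on with | H y =>
    show Quotient.liftOn' (QuotientGroup.mk x * QuotientGroup.mk y) _ _ = _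
    rw [← QuotientGroup.mk_mul]
    show QuotientGroup.mk (φ (x * y)) =
      QuotientGroup.mk (act (φ x) y) * QuotientGroup.mk (φ y)
    rw [← QuotientGroup.mk_mul, hcoc]
end

section
/- Let (X,r) be a finite non-degenerate solution to the Yang–Baxter equation, and define x ∼ x′ iff σ_x = σ_{x′} and τ_x = τ_{x′}. Then r descends to a well-defined non-degenerate solution on the quotient X/∼; i.e., x ∼ x′ implies σ_y(x) ∼ σ_y(x′) and τ_y(x) ∼ τ_y(x′) for all y ∈ X. -/
/-- The retraction of a finite non-degenerate YBE solution is well defined: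
if `σ_x = σ_{x'}` and `τ_x = τ_{x'}`, then the same holds for the pairs
`(σ_y x, σ_y x')` and `(τ_y x, τ_y x')`, so `r` descends to a solution on the
quotient of `X` by the relation `x ∼ x' ↔ σ_x = σ_{x'} ∧ τ_x = τ_{x'}`. -/
theorem retraction_well_defined {X : Type*} [Fintype X]
    (r : X × X → X × X) (σ τ : X → X → X)
    (hr : ∀ x y, r (x, y) = (σ x y, τ y x))
    (hrbij : Function.Bijective r)
    (hσ : ∀ x, Function.Bijective (σ x))
    (hτ : ∀ y, Function.Bijective (τ y))
    (hbraid : ybeR1 r ∘ ybeR2 r ∘ ybeR1 r = ybeR2 r ∘ ybeR1 r ∘ ybeR2 r) :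
    ∀ x x' : X, σ x = σ x' → τ x = τ x' →
      ∀ y : X, (σ (σ y x) = σ (σ y x') ∧ τ (σ y x) = τ (σ y x')) ∧
        (σ (τ y x) = σ (τ y x') ∧ τ (τ y x) = τ (τ y x')) := by
  -- Extract the componentwise braid identities.
  have key : ∀ a b c : X,
      σ (σ a b) (σ (τ b a) c) = σ a (σ b c) ∧
      τ c (τ b a) = τ (τ c b) (τ (σ b c) a) := by
    intro a b c
    have h := congrFun hbraid (a, b, c)
    simp only [ybeR1, ybeR2, Function.comp_apply, hr, Prod.mk.injEq] at h
    exact ⟨h.1, h.2.2⟩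
  have key1 : ∀ a b c : X, σ (σ a b) (σ (τ b a) c) = σ a (σ b c) :=
    fun a b c => (key a b c).1
  have key3 : ∀ a b c : X, τ c (τ b a) = τ (τ c b) (τ (σ b c) a) :=
    fun a b c => (key a b c).2
  intro x x' hσx hτx y
  refine ⟨⟨?_, ?_⟩, ?_, ?_⟩
  · -- σ (σ y x) = σ (σ y x')
    funext w
    obtain ⟨z, hz⟩ := (hσ (τ x y)).2 w
    have h1 := key1 y x z
    have h2 := key1 y x' z
    rw [← hτx, ← hσx] at h2
    rw [← hz, h1, h2]
  · -- τ (σ y x) = τ (σ y x')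
    funext w
    have h1 := key3 w y x
    have h2 := key3 w y x'
    rw [← hτx] at h2
    exact (hτ (τ x y)).1 (h1.symm.trans h2)
  · -- σ (τ y x) = σ (τ y x')
    funext w
    have h1 := key1 x y w
    have h2 := key1 x' y w
    rw [← hσx] at h2
    exact (hσ (σ x y)).1 (h1.trans h2.symm)
  · -- τ (τ y x) = τ (τ y x')
    funext w
    obtain ⟨a, ha⟩ := (hτ (σ x y)).2 w
    have h1 := key3 a x y
    have h2 := key3 a x' y
    rw [← hτx, ← hσx] at h2
    rw [← ha, ← h1, ← h2, hτx]
end
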